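/- arXiv:1202.2643 — 3 statements merged into one kernel-verified Lean document; each statement's English description precedes it below -/
import Mathlib

section
/- Let q be a nonzero rational number with q ≠ -1. With G̃_{n,q}(x) the q-Genocchi polynomials with weight zero defined by ∑_{n≥0} G̃_{n,q}(x) tⁿ/n! = (1+q)t·e^{xt}/(q eᵗ+1), the symmetry G̃_{n,q⁻¹}(1-x) = (-1)^{n+1}·G̃_{n,q}(x) holds for all n ≥ 0. -/
open PowerSeries

/-!
Substituting `t ↦ -t` in `F(t) (q eᵗ + 1) = (1 + q) t e^{xt}` and multiplying by `q⁻¹ eᵗ` turns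
`q e⁻ᵗ + 1` into `q⁻¹ eᵗ + 1` and `e^{-xt}` into `e^{(1-x)t}`, so `-F(-t)` satisfies the defining
equation for the parameters `(q⁻¹, 1 - x)`. Since `q eᵗ + 1` is a nonzero power series, that equation
determines its solution, and comparing coefficients of `-F(-t)` gives the sign `(-1)ⁿ⁺¹`.
-/

namespace PowerSeries

theorem rescale_C {R : Type*} [CommSemiring R] (a r : R) : rescale a (C r) = C r := by
  ext n
  rcases n with _ | _ <;> simp [coeff_rescale, coeff_C]

section CommRing

variable {A : Type*} [CommRing A] [Algebra ℚ A]

theorem rescale_neg_one_exp_mul_exp : rescale (-1 : A) (exp A) * exp A = 1 := by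
  simpa using exp_mul_exp_eq_exp_add (-1 : A) 1

theorem C_mul_exp_add_one_ne_zero [Nontrivial A] (q : A) : C q * exp A + 1 ≠ 0 := by
  intro h
  have h₀ := congrArg (coeff 0) h
  have h₁ := congrArg (coeff 1) h
  simp [coeff_exp] at h₀ h₁
  simp [h₁] at h₀

/-- `F` is the generating function `∑ G̃_{n,q}(x) tⁿ / n!` of the q-Genocchi polynomials at `x`. -/
def IsQGenocchiSeries (q x : A) (F : A⟦X⟧) : Prop :=
  F * (C q * exp A + 1) = C (1 + q) * X * rescale x (exp A)

theorem IsQGenocchiSeries.unique [IsDomain A] {q x : A} {F H : A⟦X⟧}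
    (hF : IsQGenocchiSeries q x F) (hH : IsQGenocchiSeries q x H) : F = H :=
  mul_right_cancel₀ (C_mul_exp_add_one_ne_zero q) (hF.trans hH.symm)

end CommRing

variable {K : Type*} [Field K] [Algebra ℚ K]

theorem IsQGenocchiSeries.reflect {q x : K} {F : K⟦X⟧} (hq : q ≠ 0)
    (hF : IsQGenocchiSeries q x F) : IsQGenocchiSeries q⁻¹ (1 - x) (-rescale (-1) F) := by
  unfold IsQGenocchiSeries at hF ⊢
  have hF' := congrArg (rescale (-1 : K)) hF
  simp only [map_mul, map_add, map_one, rescale_C, rescale_neg_one_X, rescale_rescale,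
    mul_neg_one] at hF'
  have hexp : rescale (-x) (exp K) * exp K = rescale (1 - x) (exp K) := by
    simpa [sub_eq_neg_add] using exp_mul_exp_eq_exp_add (-x) 1
  have hqq : C q * C q⁻¹ = (1 : K⟦X⟧) := by rw [← map_mul, mul_inv_cancel₀ hq, map_one]
  rw [map_add, map_one]
  linear_combination (-(C q⁻¹ * exp K)) * hF'
    + (rescale (-1) F * rescale (-1) (exp K) * exp K + X * rescale (-x) (exp K) * exp K) * hqq
    + rescale (-1) F * rescale_neg_one_exp_mul_exp (A := K) + ((1 + C q⁻¹) * X) * hexp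

end PowerSeries

theorem qGenocchi_symmetry_general (q : ℚ) (hq0 : q ≠ 0)
    (G G' : ℕ → ℚ → ℚ)
    (hG : ∀ x : ℚ, (PowerSeries.mk fun n => G n x / n.factorial) *
        (PowerSeries.C q * PowerSeries.exp ℚ + 1) =
        PowerSeries.C (1 + q) * PowerSeries.X * PowerSeries.rescale x (PowerSeries.exp ℚ))
    (hG' : ∀ x : ℚ, (PowerSeries.mk fun n => G' n x / n.factorial) *
        (PowerSeries.C q⁻¹ * PowerSeries.exp ℚ + 1) =
        PowerSeries.C (1 + q⁻¹) * PowerSeries.X * PowerSeries.rescale x (PowerSeries.exp ℚ)) :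
    ∀ (n : ℕ) (x : ℚ), G' n (1 - x) = (-1 : ℚ) ^ (n + 1) * G n x := by
  intro n x
  have h := congrArg (coeff n)
    (IsQGenocchiSeries.unique (hG' (1 - x)) (IsQGenocchiSeries.reflect hq0 (hG x)))
  rw [coeff_mk, map_neg, coeff_rescale, coeff_mk] at h
  have hfac : (n.factorial : ℚ) ≠ 0 := by positivity
  field_simp at h
  rw [h]
  ring

/-- symmetry G̃_{n,q⁻¹}(1-x) = (-1)^{n+1}·G̃_{n,q}(x). -/
theorem qGenocchi_symmetry (q : ℚ) (hq1 : q ≠ -1) (hq0 : q ≠ 0)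
    (G G' : ℕ → ℚ → ℚ)
    (hG : ∀ x : ℚ, (PowerSeries.mk fun n => G n x / n.factorial) *
        (PowerSeries.C q * PowerSeries.exp ℚ + 1) =
        PowerSeries.C (1 + q) * PowerSeries.X * PowerSeries.rescale x (PowerSeries.exp ℚ))
    (hG' : ∀ x : ℚ, (PowerSeries.mk fun n => G' n x / n.factorial) *
        (PowerSeries.C q⁻¹ * PowerSeries.exp ℚ + 1) =
        PowerSeries.C (1 + q⁻¹) * PowerSeries.X * PowerSeries.rescale x (PowerSeries.exp ℚ)) :
    ∀ (n : ℕ) (x : ℚ), G' n (1 - x) = (-1 : ℚ) ^ (n + 1) * G n x :=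
  qGenocchi_symmetry_general q hq0 G G' hG hG'
end

section
/- Let q be a nonzero rational number with q ≠ -1, and let G̃_{n,q}(x) be the q-Genocchi polynomials with weight zero, with G̃_{n,q} = G̃_{n,q}(0). Then for every n > 1, q²·G̃_{n+1,q}(2) = (n+1)·q·(1+q) + G̃_{n+1,q}. -/
/-!
Since `e^{(x+1)t} = eᵗ e^{xt}` and `q eᵗ + 1` is invertible (its constant term is `1 + q`),
`q` times the generating function of `G̃_{n,q}(x + 1)` plus that of `G̃_{n,q}(x)` is `(1 + q) t e^{xt}`.
Comparing coefficients, `q G̃_{n+1,q}(x + 1) + G̃_{n+1,q}(x) = (1 + q)(n + 1) xⁿ`; the theorem is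
`q` times this relation at `x = 1` minus the relation at `x = 0`, which eliminates `G̃_{n+1,q}(1)`.
-/

open PowerSeries

theorem C_mul_exp_add_one_ne_zero {q : ℚ} (hq : q ≠ -1) : C q * exp ℚ + 1 ≠ 0 := by
  intro h
  have h0 := congrArg constantCoeff h
  simp only [map_add, map_mul, constantCoeff_C, constantCoeff_exp, map_one, mul_one,
    map_zero] at h0
  exact hq (eq_neg_of_add_eq_zero_left h0)

theorem coeff_succ_C_mul_X_mul_rescale_exp (c x : ℚ) (n : ℕ) :
    coeff (n + 1) (C c * X * rescale x (exp ℚ)) = c * x ^ n / n.factorial := by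
  rw [mul_comm (C c), mul_assoc, coeff_succ_X_mul, coeff_C_mul, coeff_rescale, coeff_exp]
  simp [div_eq_mul_inv, mul_assoc]

section GenocchiGeneratingFunction

variable {q : ℚ} {G : ℕ → ℚ → ℚ}

theorem qGenocchi_egf_shift (hq : q ≠ -1)
    (hG : ∀ x : ℚ, (mk fun n => G n x / n.factorial) * (C q * exp ℚ + 1) =
      C (1 + q) * X * rescale x (exp ℚ)) (x : ℚ) :
    C q * (mk fun n => G n (x + 1) / n.factorial) + (mk fun n => G n x / n.factorial) =
      C (1 + q) * X * rescale x (exp ℚ) := by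
  apply mul_right_cancel₀ (C_mul_exp_add_one_ne_zero hq)
  rw [add_mul, mul_assoc, hG (x + 1), hG x, ← exp_mul_exp_eq_exp_add x 1, rescale_one,
    RingHom.id_apply]
  ring

theorem qGenocchi_shift (hq : q ≠ -1)
    (hG : ∀ x : ℚ, (mk fun n => G n x / n.factorial) * (C q * exp ℚ + 1) =
      C (1 + q) * X * rescale x (exp ℚ)) (x : ℚ) (n : ℕ) :
    q * G (n + 1) (x + 1) + G (n + 1) x = (1 + q) * (n + 1) * x ^ n := by
  have hcoeff := congrArg (coeff (n + 1)) (qGenocchi_egf_shift hq hG x)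
  rw [coeff_succ_C_mul_X_mul_rescale_exp, map_add, coeff_C_mul, coeff_mk, coeff_mk,
    Nat.factorial_succ, Nat.cast_mul] at hcoeff
  have hfac : (n.factorial : ℚ) ≠ 0 := Nat.cast_ne_zero.mpr n.factorial_ne_zero
  field_simp at hcoeff
  push_cast at hcoeff
  linear_combination hcoeff

end GenocchiGeneratingFunction

theorem qGenocchi_at_two_general (q : ℚ) (hq1 : q ≠ -1)
    (G : ℕ → ℚ → ℚ)
    (hG : ∀ x : ℚ, (PowerSeries.mk fun n => G n x / n.factorial) *
        (PowerSeries.C q * PowerSeries.exp ℚ + 1) =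
        PowerSeries.C (1 + q) * PowerSeries.X * PowerSeries.rescale x (PowerSeries.exp ℚ)) :
    ∀ n : ℕ, 1 < n → q ^ 2 * G (n + 1) 2 = (n + 1 : ℚ) * q * (1 + q) + G (n + 1) 0 := by
  intro n hn
  have at_one := qGenocchi_shift hq1 hG 1 n
  have at_zero := qGenocchi_shift hq1 hG 0 n
  rw [zero_pow (by omega), mul_zero, zero_add] at at_zero
  norm_num at at_one
  linear_combination q * at_one - at_zero

/-- q²·G̃_{n+1,q}(2) = (n+1)·q·(1+q) + G̃_{n+1,q} for n > 1. -/
theorem qGenocchi_at_two (q : ℚ) (hq1 : q ≠ -1) (hq0 : q ≠ 0)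
    (G : ℕ → ℚ → ℚ)
    (hG : ∀ x : ℚ, (PowerSeries.mk fun n => G n x / n.factorial) *
        (PowerSeries.C q * PowerSeries.exp ℚ + 1) =
        PowerSeries.C (1 + q) * PowerSeries.X * PowerSeries.rescale x (PowerSeries.exp ℚ)) :
    ∀ n : ℕ, 1 < n → q ^ 2 * G (n + 1) 2 = (n + 1 : ℚ) * q * (1 + q) + G (n + 1) 0 :=
  qGenocchi_at_two_general q hq1 G hG
end

section
/- Let q be a nonzero rational number with q ≠ -1 and let G̃_{n,q} denote the q-Genocchi numbers with weight zero. Define the moments M_n := G̃_{n+1,q}/(n+1) and the reflected moments N_n := (1+q) + q²·G̃_{n+1,q⁻¹}/(n+1) for n ≥ 1, with N_0 := 1 (i.e., N_n represents the value of the alternating binomial transform of the M-sequence at 1-ξ). Then for all n ≥ 1, N_n = ∑_{j=0}^{n} C(n,j)·(-1)^j·M_j, where M_0 = G̃_{1,q} and the identity N_n = (1+q) + q²·G̃_{n+1,q⁻¹}/(n+1) holds. -/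
/-!
Let `G(t) = (1 + q) t / (q eᵗ + 1)` and let `M(t) = G(t) / t` be the exponential generating
function of the moments `Mⱼ = G̃_{j+1,q} / (j + 1)`. The alternating binomial transform of `M`
is the coefficient sequence of `eᵗ M(-t)`, and reflecting `M(t) (q eᵗ + 1) = 1 + q` gives
`eᵗ M(-t) = (1 + q) eᵗ - q M(-t)`. On the other hand `q G(t; q⁻¹) = G(-t) + (1 + q) t`, so
`q G̃_{n+1,q⁻¹} = (-1)ⁿ⁺¹ G̃_{n+1,q}` for `n ≥ 1`, which turns `-q (-1)ⁿ Mₙ` into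
`q² G̃_{n+1,q⁻¹} / (n + 1)`.
-/

open PowerSeries Finset Nat

namespace PowerSeries

variable {K : Type*} [Field K]

noncomputable def egf (a : ℕ → K) : K⟦X⟧ := mk fun n => a n / n !

@[simp]
theorem coeff_egf (a : ℕ → K) (n : ℕ) : coeff n (egf a) = a n / n ! := coeff_mk _ _

theorem evalNegHom_egf (a : ℕ → K) : evalNegHom (egf a) = egf fun n => (-1) ^ n * a n := by
  ext n
  simp [evalNegHom, coeff_rescale, mul_div_assoc]

theorem evalNegHom_C (c : K) : evalNegHom (C c) = C c := by
  ext (_ | n) <;> simp [evalNegHom, coeff_rescale, coeff_C]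

variable [CharZero K]

theorem exp_eq_egf_one : exp K = egf 1 := by
  ext n
  simp [coeff_exp]

theorem egf_mul_egf (a b : ℕ → K) :
    egf a * egf b = egf fun n => ∑ j ∈ range (n + 1), n.choose j * a j * b (n - j) := by
  ext n
  rw [coeff_mul, Nat.sum_antidiagonal_eq_sum_range_succ_mk, coeff_egf, sum_div]
  refine sum_congr rfl fun j hj => ?_
  have hjn : j ≤ n := Nat.lt_succ_iff.mp (mem_range.mp hj)
  have hfac : (n.choose j * j ! * (n - j)! : K) = n ! := by
    exact_mod_cast Nat.choose_mul_factorial_mul_factorial hjn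
  have hchoose : (n.choose j : K) ≠ 0 := by exact_mod_cast (Nat.choose_pos hjn).ne'
  simp only [coeff_egf]
  rw [← hfac]
  field_simp

theorem X_mul_egf_succ_div {a : ℕ → K} (ha : a 0 = 0) :
    X * egf (fun n => a (n + 1) / (n + 1)) = egf a := by
  ext (_ | n)
  · simp [ha]
  · rw [coeff_succ_X_mul, coeff_egf, coeff_egf, Nat.factorial_succ]
    push_cast
    field_simp

theorem exp_add_C_ne_zero (c : K) : exp K + C c ≠ 0 := fun h => by
  simpa [coeff_exp] using congrArg (coeff 1) h

/-- Reflecting `m(t) (q eᵗ + 1) = c` gives `eᵗ m(-t) = c eᵗ - q m(-t)`. -/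
theorem sum_choose_neg_one_pow_mul_of_egf_mul {m : ℕ → K} {q c : K}
    (h : egf m * (C q * exp K + 1) = C c) (n : ℕ) :
    ∑ j ∈ range (n + 1), n.choose j * (-1) ^ j * m j = c - q * ((-1) ^ n * m n) := by
  have hrefl : evalNegHom (egf m) * exp K = C c * exp K - C q * evalNegHom (egf m) := by
    have h' := congrArg evalNegHom h
    simp only [map_mul, map_add, map_one, evalNegHom_C] at h'
    linear_combination exp K * h' - C q * evalNegHom (egf m) * exp_mul_exp_neg_eq_one (A := K)
  rw [exp_eq_egf_one, evalNegHom_egf, egf_mul_egf] at hrefl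
  have hn := congrArg (coeff n) hrefl
  simp only [map_sub, coeff_C_mul, coeff_egf, Pi.one_apply, mul_one] at hn
  have hfac : (n ! : K) ≠ 0 := Nat.cast_ne_zero.mpr n.factorial_ne_zero
  field_simp at hn
  exact (sum_congr rfl fun j _ => by ring).trans (hn.trans (by ring))

variable {q : K} {g : ℕ → K}

theorem egf_succ_div_mul_of_egf_mul (hq : q ≠ -1)
    (hg : egf g * (C q * exp K + 1) = C (1 + q) * X) :
    egf (fun n => g (n + 1) / (n + 1)) * (C q * exp K + 1) = C (1 + q) := by
  have hg0 : g 0 = 0 := by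
    have hq' : q + 1 ≠ 0 := fun h => hq (eq_neg_of_add_eq_zero_left h)
    simpa [coeff_mul, coeff_exp, hq'] using congrArg (coeff 0) hg
  apply X_mul_cancel
  rw [← mul_assoc, X_mul_egf_succ_div hg0, hg, mul_comm]

/-- Both sides equal `q (1 + q) t / (eᵗ + q)`. -/
theorem C_mul_egf_eq_evalNegHom_add {g' : ℕ → K} (hq : q ≠ 0)
    (hg : egf g * (C q * exp K + 1) = C (1 + q) * X)
    (hg' : egf g' * (C q⁻¹ * exp K + 1) = C (1 + q⁻¹) * X) :
    C q * egf g' = evalNegHom (egf g) + C (1 + q) * X := by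
  have hinv : C q * C q⁻¹ = (1 : K⟦X⟧) := by rw [← map_mul, mul_inv_cancel₀ hq, map_one]
  have hneg := congrArg evalNegHom hg
  simp only [map_mul, map_add, map_one, evalNegHom_C, evalNegHom_X] at hneg hg' ⊢
  apply mul_right_cancel₀ (exp_add_C_ne_zero q)
  linear_combination C q ^ 2 * hg' + (C q * X - C q * egf g' * exp K) * hinv
    - exp K * hneg + C q * evalNegHom (egf g) * exp_mul_exp_neg_eq_one (A := K)

theorem mul_apply_eq_neg_one_pow_mul_apply {g' : ℕ → K} (hq : q ≠ 0)
    (hg : egf g * (C q * exp K + 1) = C (1 + q) * X)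
    (hg' : egf g' * (C q⁻¹ * exp K + 1) = C (1 + q⁻¹) * X) {n : ℕ} (hn : n ≠ 1) :
    q * g' n = (-1) ^ n * g n := by
  have h := congrArg (coeff n) (C_mul_egf_eq_evalNegHom_add hq hg hg')
  rw [evalNegHom_egf, map_add, coeff_C_mul, coeff_C_mul, coeff_X, if_neg hn, coeff_egf,
    coeff_egf, mul_zero, add_zero] at h
  have hfac : (n ! : K) ≠ 0 := Nat.cast_ne_zero.mpr n.factorial_ne_zero
  field_simp at h
  exact h

end PowerSeries

/-- ∑_{j=0}^{n} C(n,j)(-1)^j G̃_{j+1,q}/(j+1) = (1+q) + q²·G̃_{n+1,q⁻¹}/(n+1)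
for n ≥ 1. -/
theorem qGenocchi_reflected_moments (q : ℚ) (hq1 : q ≠ -1) (hq0 : q ≠ 0)
    (g g' : ℕ → ℚ)
    (hg : (PowerSeries.mk fun n => g n / n.factorial) *
        (PowerSeries.C (R := ℚ) q * PowerSeries.exp ℚ + 1) =
        PowerSeries.C (R := ℚ) (1 + q) * PowerSeries.X)
    (hg' : (PowerSeries.mk fun n => g' n / n.factorial) *
        (PowerSeries.C (R := ℚ) q⁻¹ * PowerSeries.exp ℚ + 1) =
        PowerSeries.C (R := ℚ) (1 + q⁻¹) * PowerSeries.X) :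
    ∀ n : ℕ, 1 ≤ n →
      (∑ j ∈ Finset.range (n + 1), (n.choose j : ℚ) * (-1) ^ j * (g (j + 1) / (j + 1))) =
        (1 + q) + q ^ 2 * (g' (n + 1) / (n + 1)) := by
  intro n hn
  have hreflect : q * g' (n + 1) = (-1) ^ (n + 1) * g (n + 1) :=
    mul_apply_eq_neg_one_pow_mul_apply hq0 hg hg' (by omega)
  rw [sum_choose_neg_one_pow_mul_of_egf_mul (egf_succ_div_mul_of_egf_mul hq1 hg) n]
  linear_combination (-q / (n + 1)) * hreflect
end
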